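/- arXiv:1509.05435 — 2 statements merged into one kernel-verified Lean document; each statement's English description precedes it below -/
import Mathlib

section
/- Let d ≥ 6 and let S_d ⊂ P³ be the surface defined by x0^{d-1}·x1 + x1^{d-1}·x2 + x2^{d-1}·x3 + x3^{d-1}·x0 = 0. For each pair (α, β) ∈ ℂ² satisfying α = -β^{d-1} and β^{(d-1)²+1} = (-1)^d, the line L_{α,β} = {(α·x : β·y : x : y) : (x:y) ∈ P¹} is contained in S_d. -/
/-- For `d ≥ 6` and `(α,β)` with `α = -β^{d-1}` and `β^{(d-1)²+1} = (-1)^d`, the line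
`{(αx : βy : x : y)}` is contained in the surface
`S_d = {x0^{d-1}x1 + x1^{d-1}x2 + x2^{d-1}x3 + x3^{d-1}x0 = 0}`. -/
theorem stmt7 (d : ℕ) (hd : 6 ≤ d) (α β : ℂ)
    (hα : α = -β^(d-1)) (hβ : β^((d-1)^2+1) = (-1)^d) :
    ∀ x y : ℂ,
      (α*x)^(d-1) * (β*y) + (β*y)^(d-1) * x + x^(d-1) * y + y^(d-1) * (α*x) = 0 := by
  intro x y
  have h1 : α^(d-1) * β = -1 := by
    rw [hα, neg_pow, ← pow_mul, ← sq]
    rw [mul_assoc, ← pow_succ, hβ, ← pow_add]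
    have h2 : d - 1 + d = 2 * d - 1 := by omega
    rw [h2]
    have : Odd (2 * d - 1) := by
      refine ⟨d - 1, by omega⟩
    simpa using this.neg_one_pow
  linear_combination (x^(d-1)*y) * h1 + (y^(d-1)*x) * hα
end

section
/- Let F ∈ ℂ[x0,...,x_{2m+1}] be homogeneous of degree d and suppose the hypersurface X = {F = 0} is smooth (i.e. F and its partial derivatives have no common projective zero). Let ω be a contact 1-form on ℂ^{2m+2} with constant coefficients contraction, ω = i_R σ with σ a nondegenerate constant alternating 2-form, so that ω vanishes nowhere on ℂ^{2m+2}∖{0}. If Z ⊂ X is an irreducible projective subvariety of positive dimension along which dF restricted to T X pulls back proportionally to ω, say dF|_Z = s·ω|_Z with s a homogeneous function of degree d-2 on Z, and d > 2, then s has a zero on Z, and X is singular at that zero — a contradiction. Hence the zero locus of the restriction of ω to a smooth hypersurface of degree d ≥ 3 in P^{2m+1} is zero-dimensional. -/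
/-!
Rescaling a point `p` with `Λ p = s · ∇F(p)` by a root `t` of `t ^ (d - 2) = s` (here `s ≠ 0`
because `Λ` is invertible) lands in the affine set `Z = {y | ∇F(y) = Λ y}`. By Euler's identity
and smoothness, `0` is the only common zero of the partials `∂F/∂xᵢ`, which are forms of degree
`d - 1 > 1`; by the Nullstellensatz every form of large degree lies in the ideal they generate.
On `Z` such a form can be rewritten with `∇F` replaced by the linear `Λ y`, which lowers its
degree, so polynomial functions on `Z` form a finite-dimensional space. Then each coordinate
satisfies a nonzero univariate polynomial on `Z`, and `Z` is finite.
-/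

open MvPolynomial

namespace MvPolynomial

section CommSemiring

variable {σ R : Type*} [CommSemiring R]

lemma IsHomogeneous.eval_smul {φ : MvPolynomial σ R} {n : ℕ} (hφ : φ.IsHomogeneous n)
    (t : R) (x : σ → R) : eval (t • x) φ = t ^ n * eval x φ := by
  simp only [eval_eq, Pi.smul_apply, smul_eq_mul, mul_pow, Finset.prod_mul_distrib,
    Finset.prod_pow_eq_pow_sum, Finset.mul_sum]
  refine Finset.sum_congr rfl fun α hα => ?_
  rw [← hφ.degree_eq_sum_deg_support hα]
  ring

lemma IsHomogeneous.eval_eq_zero_of_forall_eval_pderiv_eq_zero [Fintype σ] [IsAddTorsionFree R]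
    {φ : MvPolynomial σ R} {n : ℕ} (hφ : φ.IsHomogeneous n) (hn : n ≠ 0) {x : σ → R}
    (hx : ∀ i, eval x (pderiv i φ) = 0) : eval x φ = 0 := by
  have := congrArg (eval x) hφ.sum_X_mul_pderiv
  simp only [map_sum, map_mul, hx, mul_zero, Finset.sum_const_zero, map_nsmul] at this
  exact (nsmul_eq_zero_iff_right hn).mp this.symm

attribute [local instance] MvPolynomial.gradedAlgebra in
lemma homogeneousComponent_mul_of_isHomogeneous {c h : MvPolynomial σ R} {e D : ℕ}
    (hh : h.IsHomogeneous e) (hD : e ≤ D) :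
    homogeneousComponent D (c * h) = homogeneousComponent (D - e) c * h := by
  rw [← decomposition.decompose'_apply, ← decomposition.decompose'_apply]
  exact DirectSum.coe_decompose_mul_of_right_mem_of_le (homogeneousSubmodule σ R) hh hD

lemma exists_isHomogeneous_coeffs_of_mem_span {ι : Type*} [Fintype ι]
    {h : ι → MvPolynomial σ R} {e D : ℕ} (hh : ∀ i, (h i).IsHomogeneous e) (hD : e ≤ D)
    {P : MvPolynomial σ R} (hP : P.IsHomogeneous D) (hPI : P ∈ Ideal.span (Set.range h)) :
    ∃ c : ι → MvPolynomial σ R, (∀ i, (c i).IsHomogeneous (D - e)) ∧ ∑ i, c i * h i = P := by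
  obtain ⟨c, rfl⟩ := Ideal.mem_span_range_iff_exists_fun.mp hPI
  refine ⟨fun i => homogeneousComponent (D - e) (c i),
    fun i => homogeneousComponent_isHomogeneous _ _, ?_⟩
  simp only [← homogeneousComponent_mul_of_isHomogeneous (hh _) hD, ← map_sum]
  exact homogeneousComponent_eq_self hP

end CommSemiring

section Field

variable {σ K : Type*} [Field K]

noncomputable def evalOn (S : Set (σ → K)) : MvPolynomial σ K →ₗ[K] S → K :=
  LinearMap.pi fun x : S => (aeval (x : σ → K)).toLinearMap

@[simp] lemma evalOn_apply (S : Set (σ → K)) (P : MvPolynomial σ K) (x : S) :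
    evalOn S P x = eval (x : σ → K) P := by
  simp [evalOn]

lemma finite_of_finiteDimensional_range_evalOn [Finite σ] (S : Set (σ → K))
    [FiniteDimensional K (LinearMap.range (evalOn S))] : S.Finite := by
  have hcoord : ∀ j, ∃ q : Polynomial K, q ≠ 0 ∧ ∀ x ∈ S, q.eval (x j) = 0 := by
    intro j
    let f := (evalOn S ∘ₗ (Polynomial.aeval (X j : MvPolynomial σ K)).toLinearMap).codRestrict
      (LinearMap.range (evalOn S)) fun q => LinearMap.mem_range_self _ _
    have hf : ¬ Function.Injective f := fun hinj =>
      Polynomial.not_finite (Module.Finite.of_injective f hinj)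
    obtain ⟨q, hq, hq0⟩ : ∃ q, f q = 0 ∧ q ≠ 0 := by
      simpa [injective_iff_map_eq_zero] using hf
    refine ⟨q, hq0, fun x hx => ?_⟩
    have h0 : aeval x (Polynomial.aeval (X j) q) = 0 :=
      congrFun (congrArg Subtype.val hq) ⟨x, hx⟩
    rwa [← Polynomial.aeval_algHom_apply, aeval_X, Polynomial.coe_aeval_eq_eval] at h0
  choose q hq0 hq using hcoord
  refine (Set.Finite.pi fun j => Polynomial.finite_setOfPred_isRoot (hq0 j)).subset ?_
  intro x hx j _
  exact hq j x hx

lemma range_evalOn_le_map_restrictTotalDegree {ι : Type*} [Fintype ι] {e D₀ : ℕ}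
    {h g : ι → MvPolynomial σ K} (hh : ∀ i, (h i).IsHomogeneous e)
    (hg : ∀ i, (g i).totalDegree < e)
    (hD₀ : ∀ D, D₀ ≤ D → ∀ P : MvPolynomial σ K, P.IsHomogeneous D →
      P ∈ Ideal.span (Set.range h)) :
    LinearMap.range (evalOn {x | ∀ i, eval x (h i) = eval x (g i)}) ≤
      (restrictTotalDegree σ K (D₀ + e)).map (evalOn {x | ∀ i, eval x (h i) = eval x (g i)}) := by
  set Z := {x : σ → K | ∀ i, eval x (h i) = eval x (g i)}
  rintro _ ⟨P, rfl⟩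
  obtain ⟨n, hn⟩ : ∃ n, P.totalDegree ≤ n := ⟨_, le_rfl⟩
  induction n using Nat.strong_induction_on generalizing P with
  | _ n ih =>
  rw [← sum_homogeneousComponent P, map_sum]
  refine Submodule.sum_mem _ fun D hD => ?_
  have hDn : D ≤ n := by have := Finset.mem_range.mp hD; omega
  by_cases hlow : D ≤ D₀ + e
  · exact Submodule.mem_map_of_mem <| (mem_restrictTotalDegree _ _ _).mpr
      ((homogeneousComponent_isHomogeneous D P).totalDegree_le.trans hlow)
  have hPD := homogeneousComponent_isHomogeneous D P
  obtain ⟨c, hc, hsum⟩ :=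
    exists_isHomogeneous_coeffs_of_mem_span hh (by omega) hPD (hD₀ D (by omega) _ hPD)
  have hZ : evalOn Z (∑ i, c i * h i) = evalOn Z (∑ i, c i * g i) := by
    ext x
    simp [x.2 _]
  rw [← hsum, hZ, map_sum]
  refine Submodule.sum_mem _ fun i _ => ih _ ?_ _ le_rfl
  have := totalDegree_mul (c i) (g i)
  have := (hc i).totalDegree_le
  have := hg i
  omega

end Field

section IsAlgClosed

variable {σ K : Type*} [Fintype σ] [Field K] [IsAlgClosed K]

lemma exists_forall_isHomogeneous_mem_of_zeroLocus_subset {I : Ideal (MvPolynomial σ K)}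
    (hI : zeroLocus K I ⊆ {0}) :
    ∃ D₀, ∀ D, D₀ ≤ D → ∀ P : MvPolynomial σ K, P.IsHomogeneous D → P ∈ I := by
  have hX : ∀ j, X j ∈ I.radical := fun j => by
    rw [← vanishingIdeal_zeroLocus_eq_radical (K := K), mem_vanishingIdeal_iff]
    intro x hx
    simp [Set.mem_singleton_iff.mp (hI hx)]
  choose k hk using hX
  set N := ∑ j, k j
  have hXN : ∀ j, X j ^ N ∈ I := fun j =>
    I.pow_mem_of_pow_mem (hk j) (Finset.single_le_sum (fun _ _ => Nat.zero_le _)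
      (Finset.mem_univ j))
  have hmon : ∀ (α : σ →₀ ℕ) (a : K), Fintype.card σ * N < α.degree → monomial α a ∈ I := by
    intro α a hα
    obtain ⟨j, hj⟩ : ∃ j, N ≤ α j := by
      by_contra! h
      have : α.degree ≤ ∑ _j : σ, N := by
        rw [Finsupp.degree_eq_sum]
        exact Finset.sum_le_sum fun j _ => (h j).le
      simp only [Finset.sum_const, Finset.card_univ, smul_eq_mul] at this
      omega
    rw [← tsub_add_cancel_of_le (Finsupp.single_le_iff.mpr hj), ← mul_one a, ← monomial_mul,
      ← X_pow_eq_monomial]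
    exact I.mul_mem_left _ (hXN j)
  refine ⟨Fintype.card σ * N + 1, fun D hD P hP => ?_⟩
  rw [P.as_sum]
  refine I.sum_mem fun α hα => hmon α _ ?_
  rw [Finsupp.degree_apply, ← hP.degree_eq_sum_deg_support hα]
  omega

theorem finite_setOf_forall_eval_eq {ι : Type*} [Fintype ι] {e : ℕ}
    {h g : ι → MvPolynomial σ K} (hh : ∀ i, (h i).IsHomogeneous e) (hg : ∀ i, (g i).totalDegree < e)
    (hzero : ∀ x : σ → K, (∀ i, eval x (h i) = 0) → x = 0) :
    {x : σ → K | ∀ i, eval x (h i) = eval x (g i)}.Finite := by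
  obtain ⟨D₀, hD₀⟩ := exists_forall_isHomogeneous_mem_of_zeroLocus_subset (K := K)
    (I := Ideal.span (Set.range h)) fun x hx => hzero x fun i =>
      (mem_zeroLocus_iff.mp hx) _ (Ideal.subset_span (Set.mem_range_self i))
  have := Submodule.finiteDimensional_of_le (range_evalOn_le_map_restrictTotalDegree hh hg hD₀)
  exact finite_of_finiteDimensional_range_evalOn _

end IsAlgClosed

end MvPolynomial

theorem stmt15_general (m d : ℕ) (hd : 3 ≤ d)
    (F : MvPolynomial (Fin (2*m+2)) ℂ) (hF : F.IsHomogeneous d)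
    (hsm : ∀ x : Fin (2*m+2) → ℂ, x ≠ 0 → MvPolynomial.eval x F = 0 →
        ∃ i, MvPolynomial.eval x (MvPolynomial.pderiv i F) ≠ 0)
    (lam : Matrix (Fin (2*m+2)) (Fin (2*m+2)) ℂ)
    (hnd : IsUnit lam.det) :
    {p : Projectivization ℂ (Fin (2*m+2) → ℂ) |
        MvPolynomial.eval p.rep F = 0 ∧
        ∃ s : ℂ, ∀ i, (∑ j, lam i j * p.rep j) =
          s * MvPolynomial.eval p.rep (MvPolynomial.pderiv i F)}.Finite := by
  set g : Fin (2*m+2) → MvPolynomial (Fin (2*m+2)) ℂ := fun i => ∑ j, C (lam i j) * X j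
  have hg : ∀ i, (g i).totalDegree < d - 1 := fun i =>
    ((IsHomogeneous.sum _ _ 1 fun j _ => isHomogeneous_C_mul_X _ _).totalDegree_le).trans_lt
      (by omega)
  set Z := {x : Fin (2*m+2) → ℂ | ∀ i, eval x (pderiv i F) = eval x (g i)}
  have hZ : Z.Finite := finite_setOf_forall_eval_eq (fun _ => hF.pderiv) hg fun x hx => by
    by_contra hx0
    obtain ⟨i, hi⟩ := hsm x hx0 (hF.eval_eq_zero_of_forall_eval_pderiv_eq_zero (by omega) hx)
    exact hi (hx i)
  have := (hZ.sdiff (t := {0})).to_subtype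
  refine (Set.finite_range fun y : ↥(Z \ {0}) => Projectivization.mk ℂ y.1 y.2.2).subset ?_
  rintro p ⟨-, s, hs⟩
  have hp := p.rep_nonzero
  have hs0 : s ≠ 0 := by
    rintro rfl
    refine hp (Matrix.eq_zero_of_mulVec_eq_zero hnd.ne_zero (funext fun i => ?_))
    simpa [Matrix.mulVec, dotProduct] using hs i
  obtain ⟨t, rfl⟩ := IsAlgClosed.exists_pow_nat_eq s (n := d - 2) (by omega)
  have ht : t ≠ 0 := by rintro rfl; exact hs0 (zero_pow (by omega))
  refine ⟨⟨t • p.rep, fun i => ?_, smul_ne_zero ht hp⟩, ?_⟩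
  · have hpow : t ^ (d - 1) = t * t ^ (d - 2) := by rw [← pow_succ']; congr 1; omega
    simp only [g, hF.pderiv.eval_smul, hpow, map_sum, map_mul, eval_C, eval_X, Pi.smul_apply,
      smul_eq_mul]
    rw [mul_assoc, ← hs i, Finset.mul_sum]
    exact Finset.sum_congr rfl fun j _ => by ring
  · exact ((Projectivization.mk_eq_mk_iff' ℂ _ _ _ hp).mpr ⟨t, rfl⟩).trans p.mk_rep

/-- Let `X = {F = 0} ⊂ P^{2m+1}` be a smooth hypersurface of degree `d ≥ 3` and let
`ω = i_R σ` be the contact form of a constant symplectic form `σ` given by an invertible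
skew-symmetric matrix `lam`. Then the zero locus of the restriction of `ω` to `X`
(the points of `X` where `ω` is proportional to `dF`) is zero-dimensional, i.e. finite
in projective space. -/
theorem stmt15 (m d : ℕ) (hm : 1 ≤ m) (hd : 3 ≤ d)
    (F : MvPolynomial (Fin (2*m+2)) ℂ) (hF : F.IsHomogeneous d)
    (hsm : ∀ x : Fin (2*m+2) → ℂ, x ≠ 0 → MvPolynomial.eval x F = 0 →
        ∃ i, MvPolynomial.eval x (MvPolynomial.pderiv i F) ≠ 0)
    (lam : Matrix (Fin (2*m+2)) (Fin (2*m+2)) ℂ)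
    (hskew : lam.transpose = -lam) (hnd : IsUnit lam.det) :
    {p : Projectivization ℂ (Fin (2*m+2) → ℂ) |
        MvPolynomial.eval p.rep F = 0 ∧
        ∃ s : ℂ, ∀ i, (∑ j, lam i j * p.rep j) =
          s * MvPolynomial.eval p.rep (MvPolynomial.pderiv i F)}.Finite :=
  stmt15_general m d hd F hF hsm lam hnd
end
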